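/- arXiv:1104.4796 — 2 statements merged into one kernel-verified Lean document; each statement's English description precedes it below -/
import Mathlib

section
/- Let D be a convex polytope and b: D → D an affine automorphism such that for every proper face τ of D, either b(τ) = τ or τ ∩ b(τ) = ∅, and b is induced from an automorphism of a permutohedron P^{q−1} permuting the coordinate axes, with D a face of P^{q−1}. If additionally there is a face τ̂ of D with b(τ̂) = τ̂ pointwise fixed, then b is the identity on D. (Special case: any coordinate-permutation automorphism of the permutohedron restricted to faces containing a fixed face and preserving each such face is the identity.) -/
/-- The points `P_π = (π(1), ..., π(q))`. -/
def permutoPoints (q : ℕ) : Set (Fin q → ℝ) :=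
  {x | ∃ π : Equiv.Perm (Fin q), ∀ i, x i = (π i : ℕ) + 1}

/-- The permutohedron of order `q` in `ℝ^q`. -/
noncomputable def permutohedron (q : ℕ) : Set (Fin q → ℝ) :=
  convexHull ℝ (permutoPoints q)

/-- The set of maximizers in `C` of the linear functional `x ↦ ∑ i, lam i * x i`. -/
def maxSet {q : ℕ} (C : Set (Fin q → ℝ)) (lam : Fin q → ℝ) : Set (Fin q → ℝ) :=
  {x ∈ C | ∀ y ∈ C, ∑ i, lam i * y i ≤ ∑ i, lam i * x i}

/-- `F` is a face of the convex set `C`. -/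
def IsFace {q : ℕ} (C F : Set (Fin q → ℝ)) : Prop :=
  ∃ lam : Fin q → ℝ, F = maxSet C lam

/-- The action of a permutation `σ ∈ Σ_q` on `ℝ^q` by permuting the coordinate axes. -/
def permAct {q : ℕ} (σ : Equiv.Perm (Fin q)) (x : Fin q → ℝ) : Fin q → ℝ :=
  fun i => x (σ⁻¹ i)

/-!
A nonempty face of a face of the permutohedron contains a vertex `(π(1), …, π(q))`, by
Krein–Milman. A vertex has pairwise distinct coordinates, so the only coordinate permutation
fixing it is the identity.
-/

lemma IsFace.isExposed {q : ℕ} {C F : Set (Fin q → ℝ)} (h : IsFace C F) :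
    IsExposed ℝ C F := by
  obtain ⟨lam, rfl⟩ := h
  refine fun _ => ⟨∑ i, lam i • ContinuousLinearMap.proj i, ?_⟩
  simp [maxSet]

lemma permutoPoints_finite (q : ℕ) : (permutoPoints q).Finite :=
  (Set.finite_range fun π : Equiv.Perm (Fin q) => fun i => ((π i : ℕ) : ℝ) + 1).subset
    fun _ ⟨π, hπ⟩ => ⟨π, funext fun i => (hπ i).symm⟩

lemma exists_mem_of_isFace_of_isFace_convexHull {q : ℕ} {S D τ : Set (Fin q → ℝ)}
    (hS : S.Finite) (hD : IsFace (convexHull ℝ S) D) (hτ : IsFace D τ) (hne : τ.Nonempty) :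
    ∃ v ∈ τ, v ∈ S := by
  have hDτ := hτ.isExposed
  have hSD := hD.isExposed
  have hτcomp : IsCompact τ := hDτ.isCompact (hSD.isCompact (hS.isCompact_convexHull ℝ))
  obtain ⟨v, hv⟩ := hτcomp.extremePoints_nonempty hne
  have hext : IsExtreme ℝ (convexHull ℝ S) τ := hSD.isExtreme.trans hDτ.isExtreme
  exact ⟨v, hv.1, extremePoints_convexHull_subset (hext.extremePoints_subset_extremePoints hv)⟩

lemma injective_of_mem_permutoPoints {q : ℕ} {v : Fin q → ℝ} (hv : v ∈ permutoPoints q) :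
    Function.Injective v := by
  obtain ⟨π, hπ⟩ := hv
  intro i j hij
  rw [hπ i, hπ j, add_left_inj, Nat.cast_inj, Fin.val_inj] at hij
  exact π.injective hij

lemma eq_one_of_permAct_eq_self {q : ℕ} {σ : Equiv.Perm (Fin q)} {v : Fin q → ℝ}
    (hv : Function.Injective v) (hσ : permAct σ v = v) : σ = 1 :=
  inv_eq_one.mp (Equiv.ext fun i => hv (congrFun hσ i))

lemma permAct_one {q : ℕ} (x : Fin q → ℝ) : permAct 1 x = x := rfl

theorem perm_automorphism_fixing_face_is_identity_general (q : ℕ) (σ : Equiv.Perm (Fin q))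
    (D τhat : Set (Fin q → ℝ))
    (hD : IsFace (permutohedron q) D)
    (hτ : IsFace D τhat) (hne : τhat.Nonempty)
    (hfix : ∀ x ∈ τhat, permAct σ x = x) :
    ∀ x ∈ D, permAct σ x = x := by
  obtain ⟨v, hvτ, hv⟩ :=
    exists_mem_of_isFace_of_isFace_convexHull (permutoPoints_finite q) hD hτ hne
  obtain rfl := eq_one_of_permAct_eq_self (injective_of_mem_permutoPoints hv) (hfix v hvτ)
  exact fun x _ => permAct_one x

/-- Let `b` be the automorphism of a face `D` of the permutohedron `P^{q−1}` induced by a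
coordinate-permutation `σ`, mapping `D` onto itself, and such that every proper face `τ` of `D`
satisfies `b(τ) = τ` or `τ ∩ b(τ) = ∅`. If some face `τ̂` of `D` is pointwise fixed by `b`,
then `b` is the identity on `D`. -/
theorem perm_automorphism_fixing_face_is_identity (q : ℕ) (σ : Equiv.Perm (Fin q))
    (D τhat : Set (Fin q → ℝ))
    (hD : IsFace (permutohedron q) D)
    (hσD : permAct σ '' D = D)
    (hfaces : ∀ τ : Set (Fin q → ℝ), IsFace D τ → τ ≠ D →
      (permAct σ '' τ = τ ∨ (permAct σ '' τ) ∩ τ = ∅))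
    (hτ : IsFace D τhat) (hne : τhat.Nonempty)
    (hfix : ∀ x ∈ τhat, permAct σ x = x) :
    ∀ x ∈ D, permAct σ x = x :=
  perm_automorphism_fixing_face_is_identity_general q σ D τhat hD hτ hne hfix
end

section
/- Let X be a topological space obtained by gluing a family of Hausdorff spaces X_i along open subsets via homeomorphisms (i.e., X = (⊔ X_i)/∼ with the quotient topology, where the gluing maps are homeomorphisms between open subsets), and suppose there is a continuous map e: X → Z to a Hausdorff space Z such that any two points of X with the same e-image lie in the image of a common chart X_i. Then X is Hausdorff. -/
open Topology Filter

theorem Topology.IsOpenEmbedding.disjoint_nhds_of_ne {Y X : Type*} [TopologicalSpace Y]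
    [T2Space Y] [TopologicalSpace X] {f : Y → X} (hf : IsOpenEmbedding f) {x y : Y}
    (hxy : x ≠ y) : Disjoint (𝓝 (f x)) (𝓝 (f y)) := by
  rw [← hf.map_nhds_eq, ← hf.map_nhds_eq, disjoint_map hf.injective]
  exact disjoint_nhds_nhds.2 hxy

theorem t2Space_of_continuous_of_disjoint_nhds_of_eq {X Z : Type*} [TopologicalSpace X]
    [TopologicalSpace Z] [T2Space Z] {e : X → Z} (he : Continuous e)
    (hfib : ∀ a b : X, a ≠ b → e a = e b → Disjoint (𝓝 a) (𝓝 b)) : T2Space X := by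
  refine t2Space_iff_disjoint_nhds.2 fun a b hab => ?_
  by_cases hab' : e a = e b
  · exact hfib a b hab hab'
  · exact (he.tendsto a).disjoint (disjoint_nhds_nhds.2 hab') (he.tendsto b)

/-- Let `X` be a space glued from a family of Hausdorff spaces `X i` along open subsets via
homeomorphisms, so that each chart map `φ i : X i → X` is an open embedding. If there is a
continuous map `e : X → Z` to a Hausdorff space such that any two points of `X` with the same
`e`-image lie in the image of a common chart, then `X` is Hausdorff. -/
theorem t2_of_glued_charts {ι : Type*} {X Z : Type*} [TopologicalSpace X] [TopologicalSpace Z]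
    [T2Space Z] (Xi : ι → Type*) [∀ i, TopologicalSpace (Xi i)] [∀ i, T2Space (Xi i)]
    (φ : ∀ i, Xi i → X) (hφ : ∀ i, IsOpenEmbedding (φ i))
    (e : X → Z) (he : Continuous e)
    (hch : ∀ a b : X, e a = e b → ∃ i, a ∈ Set.range (φ i) ∧ b ∈ Set.range (φ i)) :
    T2Space X := by
  refine t2Space_of_continuous_of_disjoint_nhds_of_eq he fun a b hab hfib => ?_
  obtain ⟨i, ⟨x, rfl⟩, ⟨y, rfl⟩⟩ := hch a b hfib
  exact (hφ i).disjoint_nhds_of_ne (ne_of_apply_ne (φ i) hab)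
end
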